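/- arXiv:math/0210267 — 3 statements merged into one kernel-verified Lean document; each statement's English description precedes it below -/
import Mathlib

section
/- Moran's theorem: let λ₁,…,λ_p ∈ (0,1) and let Δ_{i₁⋯i_n} ⊆ ℝ be a family of pairwise disjoint closed intervals, indexed by finite words over {1,…,p}, such that Δ_{i₁⋯i_n i_{n+1}} ⊆ Δ_{i₁⋯i_n} and the length of Δ_{i₁⋯i_n} equals ∏_{k=1}^n λ_{i_k}. Then the limit set F = ⋂_{n≥1} ⋃_{i₁⋯i_n} Δ_{i₁⋯i_n} has Hausdorff dimension equal to the unique s with ∑_{k=1}^p λ_k^s = 1. -/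
/-!
The intervals of generation `n` cover the limit set with `∑ diam ^ s = (∑ λₖ ^ s) ^ n = 1`,
so `μH[s] F ≤ 1`. For the lower bound, push the Bernoulli measure with weights `λₖ ^ s` on
`ℕ → Fin p` forward along the coding map. A ball of radius `r` meets at most `4 / min λ` of
the pairwise disjoint intervals `Δ_w` with `λ_w ≤ r < λ_{w'}` (`w'` is `w` without its last
letter), and each of them carries mass `λ_w ^ s ≤ r ^ s`; the mass distribution principle then
gives `dimH F ≥ s`.
-/

open Set MeasureTheory Metric Filter

section ListProd

variable {ι : Type*} {f : ι → ℝ}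

theorem List.prod_map_nonneg (h0 : ∀ i, 0 ≤ f i) (w : List ι) : 0 ≤ (w.map f).prod :=
  List.prod_nonneg (by simpa using fun i _ => h0 i)

theorem List.prod_map_le_pow (h0 : ∀ i, 0 ≤ f i) {c : ℝ} (hc : ∀ i, f i ≤ c) (w : List ι) :
    (w.map f).prod ≤ c ^ w.length := by
  induction w with
  | nil => simp
  | cons a w ih =>
    rw [List.map_cons, List.prod_cons, List.length_cons, pow_succ']
    exact mul_le_mul (hc a) ih (List.prod_map_nonneg h0 w) ((h0 a).trans (hc a))

theorem List.prod_map_append_le (h0 : ∀ i, 0 ≤ f i) (h1 : ∀ i, f i ≤ 1) (u v : List ι) :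
    ((u ++ v).map f).prod ≤ (u.map f).prod := by
  rw [List.map_append, List.prod_append]
  refine mul_le_of_le_one_right (List.prod_map_nonneg h0 u) ?_
  simpa using List.prod_map_le_pow h0 h1 v

theorem List.prod_map_ofReal_rpow (h0 : ∀ i, 0 ≤ f i) (s : ℝ) (w : List ι) :
    (w.map fun i => ENNReal.ofReal (f i ^ s)).prod = ENNReal.ofReal ((w.map f).prod ^ s) := by
  induction w with
  | nil => simp
  | cons a w ih =>
    rw [List.map_cons, List.prod_cons, ih, List.map_cons, List.prod_cons,
      Real.mul_rpow (h0 a) (List.prod_map_nonneg h0 w),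
      ENNReal.ofReal_mul (Real.rpow_nonneg (h0 a) s)]

end ListProd

theorem exists_forall_le_of_mem_Ico {ι : Type*} [Finite ι] {f : ι → ℝ}
    (hf : ∀ i, f i ∈ Ico 0 1) : ∃ c ∈ Ico (0 : ℝ) 1, ∀ i, f i ≤ c := by
  cases isEmpty_or_nonempty ι
  · exact ⟨0, ⟨le_rfl, one_pos⟩, isEmptyElim⟩
  · obtain ⟨i₀, hi₀⟩ := Finite.exists_max f
    exact ⟨f i₀, hf i₀, hi₀⟩

theorem exists_pos_forall_le {ι : Type*} [Finite ι] {f : ι → ℝ} (hf : ∀ i, 0 < f i) :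
    ∃ m > 0, ∀ i, m ≤ f i := by
  cases isEmpty_or_nonempty ι
  · exact ⟨1, one_pos, isEmptyElim⟩
  · obtain ⟨i₀, hi₀⟩ := Finite.exists_min f
    exact ⟨f i₀, hf i₀, hi₀⟩

theorem card_mul_le_measure_of_pairwiseDisjoint {α X : Type*} [MeasurableSpace X]
    (μ : Measure X) {s : Finset α} {t : α → Set X} {U : Set X} {c : ENNReal}
    (hd : (s : Set α).PairwiseDisjoint t) (hm : ∀ a ∈ s, MeasurableSet (t a))
    (hU : ∀ a ∈ s, t a ⊆ U) (hc : ∀ a ∈ s, c ≤ μ (t a)) : s.card * c ≤ μ U :=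
  calc (s.card : ENNReal) * c = ∑ _ ∈ s, c := by rw [Finset.sum_const, nsmul_eq_mul]
    _ ≤ ∑ a ∈ s, μ (t a) := Finset.sum_le_sum hc
    _ = μ (⋃ a ∈ s, t a) := (measure_biUnion_finset hd hm).symm
    _ ≤ μ U := measure_mono (iUnion₂_subset hU)

section MassDistribution

variable {X : Type*} [MetricSpace X] [MeasurableSpace X] (μ : Measure X) {s r₀ : ℝ} {C : ENNReal}

theorem measure_le_mul_ediam_rpow_of_measure_closedBall_le (hr₀ : 0 < r₀) (hC : C ≠ ⊤)
    (h : ∀ x, ∀ r ∈ Ioo 0 r₀, μ (closedBall x r) ≤ C * ENNReal.ofReal r ^ s)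
    {V : Set X} (hV : ediam V ≤ ENNReal.ofReal (r₀ / 2)) : μ V ≤ C * ediam V ^ s := by
  rcases V.eq_empty_or_nonempty with rfl | ⟨x, hx⟩
  · simp
  set d := (ediam V).toReal
  have hd : ENNReal.ofReal d = ediam V :=
    ENNReal.ofReal_toReal (ne_top_of_le_ne_top ENNReal.ofReal_ne_top hV)
  have hdr : d < r₀ := by
    have := ENNReal.toReal_mono ENNReal.ofReal_ne_top hV
    rw [ENNReal.toReal_ofReal (by positivity)] at this
    linarith
  have hball : ∀ ρ ∈ Ioo d r₀, μ V ≤ C * ENNReal.ofReal ρ ^ s := by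
    refine fun ρ hρ => (measure_mono fun y hy => ?_).trans (h x ρ ⟨?_, hρ.2⟩)
    · have hρ0 : 0 ≤ ρ := ENNReal.toReal_nonneg.trans hρ.1.le
      rw [mem_closedBall, ← edist_le_ofReal hρ0]
      exact (edist_le_ediam_of_mem hy hx).trans (hd ▸ ENNReal.ofReal_le_ofReal hρ.1.le)
    · exact ENNReal.toReal_nonneg.trans_lt hρ.1
  have hcont : Continuous fun ρ : ℝ => C * ENNReal.ofReal ρ ^ s :=
    (ENNReal.continuous_const_mul hC).comp
      (ENNReal.continuous_rpow_const.comp ENNReal.continuous_ofReal)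
  rw [← hd]
  exact ge_of_tendsto ((hcont.tendsto d).mono_left nhdsWithin_le_nhds)
    (eventually_of_mem (Ioo_mem_nhdsGT hdr) hball)

theorem le_dimH_of_measure_closedBall_le [BorelSpace X] (hs : 0 ≤ s) (hr₀ : 0 < r₀)
    (hC₀ : C ≠ 0) (hC : C ≠ ⊤)
    (h : ∀ x, ∀ r ∈ Ioo 0 r₀, μ (closedBall x r) ≤ C * ENNReal.ofReal r ^ s)
    {E : Set X} (hE : μ E ≠ 0) : ENNReal.ofReal s ≤ dimH E := by
  have hle : C⁻¹ • μ ≤ μH[s] := by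
    refine Measure.le_hausdorffMeasure s _ _ (ENNReal.ofReal_pos.2 (half_pos hr₀)) fun V hV => ?_
    rw [Measure.smul_apply, smul_eq_mul, ← ENNReal.inv_mul_cancel_left hC₀ hC (b := ediam V ^ s)]
    exact mul_le_mul_right (measure_le_mul_ediam_rpow_of_measure_closedBall_le μ hr₀ hC h hV) _
  have hHE : μH[s.toNNReal] E ≠ 0 := by
    rw [Real.coe_toNNReal s hs]
    refine fun h0 => hE ?_
    have := hle E
    rw [h0, Measure.smul_apply, smul_eq_mul, nonpos_iff_eq_zero, mul_eq_zero] at this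
    exact this.resolve_left (ENNReal.inv_ne_zero.2 hC)
  exact le_dimH_of_hausdorffMeasure_ne_zero hHE

end MassDistribution

namespace Moran

variable {ι : Type*}

structure IsConstruction (lam : ι → ℝ) (Δ : List ι → Set ℝ) : Prop where
  mem_Ioo : ∀ i, lam i ∈ Ioo 0 1
  eq_Icc : ∀ w : List ι, w ≠ [] → ∃ a : ℝ, Δ w = Icc a (a + (w.map lam).prod)
  disjoint : ∀ w w' : List ι, w ≠ [] → w.length = w'.length → w ≠ w' → Disjoint (Δ w) (Δ w')
  append_singleton_subset : ∀ (w : List ι) (i : ι), w ≠ [] → Δ (w ++ [i]) ⊆ Δ w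

def limitSet (Δ : List ι → Set ℝ) : Set ℝ :=
  ⋂ (n : ℕ) (_ : 1 ≤ n), ⋃ (w : List ι) (_ : w.length = n), Δ w

def word (ω : ℕ → ι) (n : ℕ) : List ι := List.ofFn fun i : Fin n => ω i

@[simp]
theorem length_word (ω : ℕ → ι) (n : ℕ) : (word ω n).length = n := by simp [word]

@[simp]
theorem word_zero (ω : ℕ → ι) : word ω 0 = [] := rfl

theorem word_succ (ω : ℕ → ι) (n : ℕ) : word ω (n + 1) = word ω n ++ [ω n] := by
  rw [word, List.ofFn_succ_last]
  rfl

theorem word_prefix (ω : ℕ → ι) {m n : ℕ} (hmn : m ≤ n) : word ω m <+: word ω n := by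
  induction n, hmn using Nat.le_induction with
  | base => exact List.prefix_refl _
  | succ n _ ih => exact ih.trans (word_succ ω n ▸ List.prefix_append _ _)

theorem word_eq_iff (ω : ℕ → ι) (w : List ι) :
    word ω w.length = w ↔ ∀ i < w.length, w[i]? = some (ω i) := by
  rw [List.ext_getElem_iff]
  simp only [word, List.length_ofFn, List.getElem_ofFn, true_and]
  constructor
  · intro h i hi
    rw [List.getElem?_eq_getElem hi, ← h i hi hi]
  · intro h i hi _
    simpa [hi] using (h i hi).symm

/-- The common point of the nested intervals `Δ (word ω n)`, `n ≥ 1`. -/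
noncomputable def coding (Δ : List ι → Set ℝ) (ω : ℕ → ι) : ℝ := ⨆ n, sInf (Δ (word ω (n + 1)))

theorem measurable_coding [Finite ι] [MeasurableSpace ι] [MeasurableSingletonClass ι]
    (Δ : List ι → Set ℝ) : Measurable (coding Δ) :=
  Measurable.iSup fun n =>
    (measurable_of_finite fun x : Fin (n + 1) → ι => sInf (Δ (List.ofFn x))).comp
      (measurable_pi_lambda _ fun i => measurable_pi_apply (i : ℕ))

def stoppingWords (lam : ι → ℝ) (r : ℝ) : Set (List ι) :=
  {w | w ≠ [] ∧ (w.map lam).prod ≤ r ∧ r < (w.dropLast.map lam).prod}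

section StoppingWords

variable {lam : ι → ℝ} {r c : ℝ}

theorem exists_word_mem_stoppingWords (h0 : ∀ i, 0 ≤ lam i) (hc : ∀ i, lam i ≤ c) (hc1 : c < 1)
    (hr0 : 0 < r) (hr1 : r < 1) (ω : ℕ → ι) : ∃ n, word ω n ∈ stoppingWords lam r := by
  have hex : ∃ n, ((word ω n).map lam).prod ≤ r := by
    obtain ⟨N, hN⟩ := exists_pow_lt_of_lt_one hr0 hc1
    have := List.prod_map_le_pow h0 hc (word ω N)
    rw [length_word] at this
    exact ⟨N, this.trans hN.le⟩
  obtain ⟨n, hn⟩ : ∃ n, Nat.find hex = n + 1 := by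
    refine Nat.exists_eq_succ_of_ne_zero fun hzero => ?_
    have := Nat.find_spec hex
    rw [hzero, word_zero, List.map_nil, List.prod_nil] at this
    linarith
  refine ⟨n + 1, by simp [← List.length_pos_iff], hn ▸ Nat.find_spec hex, ?_⟩
  rw [word_succ, List.dropLast_concat]
  exact not_le.1 (Nat.find_min hex (by omega))

theorem finite_stoppingWords [Finite ι] (h0 : ∀ i, 0 ≤ lam i) (hc : ∀ i, lam i ≤ c)
    (hc0 : 0 ≤ c) (hc1 : c < 1) (hr0 : 0 < r) : (stoppingWords lam r).Finite := by
  obtain ⟨N, hN⟩ := exists_pow_lt_of_lt_one hr0 hc1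
  refine (List.finite_length_le ι (N + 1)).subset fun w ⟨_, _, hlt⟩ => ?_
  by_contra! hlen
  have hdrop : N ≤ w.dropLast.length := by simp at hlen ⊢; omega
  have := (List.prod_map_le_pow h0 hc w.dropLast).trans (pow_le_pow_of_le_one hc0 hc1.le hdrop)
  linarith

theorem not_prefix_of_mem_stoppingWords (h0 : ∀ i, 0 ≤ lam i) (h1 : ∀ i, lam i ≤ 1)
    {w w' : List ι} (hw : w ∈ stoppingWords lam r) (hw' : w' ∈ stoppingWords lam r)
    (hne : w ≠ w') : ¬ w <+: w' := by
  intro hpre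
  have hlt : w.length < w'.length :=
    lt_of_le_of_ne hpre.length_le fun hl => hne (hpre.eq_of_length hl)
  obtain ⟨v, hv⟩ :=
    List.prefix_of_prefix_length_le hpre (List.dropLast_prefix w') (by simp; omega)
  have := List.prod_map_append_le h0 h1 w v
  rw [hv] at this
  linarith [hw.2.1, hw'.2.2]

theorem mul_le_prod_of_mem_stoppingWords (h0 : ∀ i, 0 ≤ lam i) {m : ℝ} (hm0 : 0 ≤ m)
    (hm : ∀ i, m ≤ lam i) {w : List ι} (hw : w ∈ stoppingWords lam r) :
    m * r ≤ (w.map lam).prod := by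
  obtain ⟨hne, -, hlt⟩ := hw
  rw [← List.dropLast_append_getLast hne, List.map_append, List.prod_append, mul_comm]
  simpa using mul_le_mul hlt.le (hm _) hm0 (List.prod_map_nonneg h0 _)

end StoppingWords

section Bernoulli

variable [MeasurableSpace ι]

noncomputable def bernoulli (P : PMF ι) : Measure (ℕ → ι) :=
  Measure.infinitePi fun _ => P.toMeasure

instance (P : PMF ι) : IsProbabilityMeasure (bernoulli P) := by
  unfold bernoulli
  infer_instance

theorem bernoulli_word [MeasurableSingletonClass ι] (P : PMF ι) (w : List ι) :
    bernoulli P {ω | word ω w.length = w} = (w.map P).prod := by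
  have hpi : {ω | word ω w.length = w} =
      (Finset.range w.length : Set ℕ).pi fun i => {x | w[i]? = some x} := by
    ext ω
    simp [word_eq_iff]
  rw [hpi, bernoulli, Measure.infinitePi_pi _ fun i _ => ?_]
  · clear hpi
    induction w using List.reverseRecOn with
    | nil => simp
    | append_singleton w a ih =>
      rw [List.length_append, List.length_singleton, Finset.prod_range_succ, List.map_append,
        List.prod_append]
      congr 1
      · rw [← ih]
        refine Finset.prod_congr rfl fun i hi => ?_
        rw [List.getElem?_append_left (Finset.mem_range.1 hi)]
      · simp [PMF.toMeasure_apply_singleton]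
  · cases w[i]? <;> simp

end Bernoulli

namespace IsConstruction

variable {lam : ι → ℝ} {Δ : List ι → Set ℝ} (h : IsConstruction lam Δ)
include h

theorem nonneg (i : ι) : 0 ≤ lam i := (h.mem_Ioo i).1.le

theorem le_one (i : ι) : lam i ≤ 1 := (h.mem_Ioo i).2.le

theorem prod_pos (w : List ι) : 0 < (w.map lam).prod :=
  List.prod_pos (by simpa using fun i _ => (h.mem_Ioo i).1)

theorem eq_Icc_sInf {w : List ι} (hw : w ≠ []) :
    Δ w = Icc (sInf (Δ w)) (sInf (Δ w) + (w.map lam).prod) := by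
  obtain ⟨a, ha⟩ := h.eq_Icc w hw
  rw [ha, csInf_Icc (le_add_of_nonneg_right (h.prod_pos w).le)]

theorem volume_eq {w : List ι} (hw : w ≠ []) :
    volume (Δ w) = ENNReal.ofReal (w.map lam).prod := by
  rw [h.eq_Icc_sInf hw, Real.volume_Icc, add_sub_cancel_left]

theorem ediam_eq {w : List ι} (hw : w ≠ []) :
    ediam (Δ w) = ENNReal.ofReal (w.map lam).prod := by
  rw [h.eq_Icc_sInf hw, Real.ediam_Icc, add_sub_cancel_left]

theorem append_subset {u : List ι} (hu : u ≠ []) (v : List ι) : Δ (u ++ v) ⊆ Δ u := by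
  induction v using List.reverseRecOn with
  | nil => simp
  | append_singleton v i ih =>
    rw [← List.append_assoc]
    exact (h.append_singleton_subset _ i (by simp [hu])).trans ih

theorem subset_of_prefix {u w : List ι} (hu : u ≠ []) (huw : u <+: w) : Δ w ⊆ Δ u := by
  obtain ⟨v, rfl⟩ := huw
  exact h.append_subset hu v

/-- Compare `w` with the prefix of `w'` of the same length. -/
theorem disjoint_of_not_prefix {w w' : List ι} (hw : w ≠ []) (hlen : w.length ≤ w'.length)
    (hpre : ¬ w <+: w') : Disjoint (Δ w) (Δ w') := by
  set u := w'.take w.length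
  have hu_len : u.length = w.length := by simp [u, hlen]
  have hu : u ≠ [] := by
    rw [← List.length_pos_iff] at hw ⊢
    omega
  exact (h.disjoint w u hw hu_len.symm fun hwu => hpre (hwu ▸ List.take_prefix _ _)).mono_right
    (h.subset_of_prefix hu (List.take_prefix _ _))

theorem coding_mem (ω : ℕ → ι) {n : ℕ} (hn : n ≠ 0) : coding Δ ω ∈ Δ (word ω n) := by
  have hne : ∀ m, word ω (m + 1) ≠ [] := fun m => by simp [← List.length_pos_iff]
  obtain ⟨m, rfl⟩ := Nat.exists_eq_succ_of_ne_zero hn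
  have hIcc := fun m => h.eq_Icc_sInf (hne m)
  rw [hIcc m]
  refine mem_iInter.1 (ciSup_mem_iInter_Icc_of_antitone_Icc
    (f := fun k => sInf (Δ (word ω (k + 1))))
    (g := fun k => sInf (Δ (word ω (k + 1))) + ((word ω (k + 1)).map lam).prod) ?_ fun k => ?_) m
  · intro k l hkl
    simp only [← hIcc]
    exact h.subset_of_prefix (hne k) (word_prefix ω (by omega))
  · exact le_add_of_nonneg_right (h.prod_pos _).le

theorem coding_mem_limitSet (ω : ℕ → ι) : coding Δ ω ∈ limitSet Δ :=
  mem_iInter₂.2 fun n hn => mem_biUnion (x := word ω n) (length_word ω n)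
    (h.coding_mem ω (by omega))

/-- The stopping intervals meeting a ball of radius `r` are disjoint, have length at least
`m * r` and lie in the concentric ball of radius `2 * r`, so there are at most `4 / m` of them. -/
theorem card_mul_le_of_meet_closedBall {m r : ℝ} (hm0 : 0 ≤ m) (hm : ∀ i, m ≤ lam i)
    (hr0 : 0 < r) (x : ℝ) {T : Finset (List ι)}
    (hT : ∀ w ∈ T, w ∈ stoppingWords lam r ∧ (Δ w ∩ closedBall x r).Nonempty) :
    (T.card : ℝ) * (m * r) ≤ 4 * r := by
  have hS : ∀ w ∈ T, w ∈ stoppingWords lam r := fun w hw => (hT w hw).1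
  have hdisj : (T : Set (List ι)).PairwiseDisjoint Δ := by
    intro w hw w' hw' hne
    rcases le_total w.length w'.length with hlen | hlen
    · exact h.disjoint_of_not_prefix (hS w hw).1 hlen
        (not_prefix_of_mem_stoppingWords h.nonneg h.le_one (hS w hw) (hS w' hw') hne)
    · exact (h.disjoint_of_not_prefix (hS w' hw').1 hlen
        (not_prefix_of_mem_stoppingWords h.nonneg h.le_one (hS w' hw') (hS w hw)
          hne.symm)).symm
  have hwindow : ∀ w ∈ T, Δ w ⊆ Icc (x - 2 * r) (x + 2 * r) := by
    intro w hw z hz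
    obtain ⟨⟨hne, hlen, -⟩, y, hy, hyx⟩ := hT w hw
    rw [h.eq_Icc_sInf hne] at hy hz
    rw [mem_closedBall, Real.dist_eq, abs_le] at hyx
    constructor <;> linarith [hy.1, hy.2, hz.1, hz.2, hyx.1, hyx.2]
  have hlong : ∀ w ∈ T, ENNReal.ofReal (m * r) ≤ volume (Δ w) := fun w hw =>
    h.volume_eq (hS w hw).1 ▸
      ENNReal.ofReal_le_ofReal (mul_le_prod_of_mem_stoppingWords h.nonneg hm0 hm (hS w hw))
  have hcount := card_mul_le_measure_of_pairwiseDisjoint volume hdisj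
    (fun w hw => h.eq_Icc_sInf (hS w hw).1 ▸ measurableSet_Icc) hwindow hlong
  rw [Real.volume_Icc, ← ENNReal.ofReal_natCast, ← ENNReal.ofReal_mul (Nat.cast_nonneg _),
    ENNReal.ofReal_le_ofReal_iff (by linarith)] at hcount
  linarith

theorem coding_preimage_closedBall_subset {c r : ℝ} (hc : ∀ i, lam i ≤ c) (hc1 : c < 1)
    (hr0 : 0 < r) (hr1 : r < 1) (x : ℝ) :
    coding Δ ⁻¹' closedBall x r ⊆
      ⋃ w ∈ {w ∈ stoppingWords lam r | (Δ w ∩ closedBall x r).Nonempty},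
        {ω | word ω w.length = w} := by
  intro ω hω
  obtain ⟨n, hn⟩ := exists_word_mem_stoppingWords h.nonneg hc hc1 hr0 hr1 ω
  have hn0 : n ≠ 0 := by rintro rfl; exact hn.1 rfl
  exact mem_biUnion (x := word ω n) ⟨hn, coding Δ ω, h.coding_mem ω hn0, hω⟩ (by simp)

theorem map_coding_closedBall_le [Finite ι] [MeasurableSpace ι] [MeasurableSingletonClass ι]
    {s : ℝ} (hs : 0 ≤ s) (P : PMF ι) (hP : ⇑P = fun i => ENNReal.ofReal (lam i ^ s))
    {c m r : ℝ} (hc : ∀ i, lam i ≤ c) (hc0 : 0 ≤ c) (hc1 : c < 1) (hm : ∀ i, m ≤ lam i)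
    (hm0 : 0 < m) (hr0 : 0 < r) (hr1 : r < 1) (x : ℝ) :
    (bernoulli P).map (coding Δ) (closedBall x r) ≤
      ENNReal.ofReal (4 / m) * ENNReal.ofReal r ^ s := by
  set A := {w ∈ stoppingWords lam r | (Δ w ∩ closedBall x r).Nonempty}
  have hA : A.Finite := (finite_stoppingWords h.nonneg hc hc0 hc1 hr0).subset (sep_subset _ _)
  have hcard : (hA.toFinset.card : ENNReal) ≤ ENNReal.ofReal (4 / m) := by
    have := h.card_mul_le_of_meet_closedBall hm0.le hm hr0 x (T := hA.toFinset) (by simp [A])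
    rw [← ENNReal.ofReal_natCast]
    refine ENNReal.ofReal_le_ofReal ((le_div_iff₀ hm0).2 ?_)
    nlinarith
  have hcyl : ∀ w ∈ hA.toFinset, bernoulli P {ω | word ω w.length = w} ≤ ENNReal.ofReal r ^ s := by
    intro w hw
    rw [bernoulli_word, hP, List.prod_map_ofReal_rpow h.nonneg,
      ENNReal.ofReal_rpow_of_nonneg hr0.le hs]
    exact ENNReal.ofReal_le_ofReal
      (Real.rpow_le_rpow (List.prod_map_nonneg h.nonneg w) (hA.mem_toFinset.1 hw).1.2.1 hs)
  calc (bernoulli P).map (coding Δ) (closedBall x r)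
      = bernoulli P (coding Δ ⁻¹' closedBall x r) :=
        Measure.map_apply (measurable_coding Δ) measurableSet_closedBall
    _ ≤ bernoulli P (⋃ w ∈ hA.toFinset, {ω | word ω w.length = w}) :=
        measure_mono (by
          simpa only [Set.Finite.mem_toFinset] using
            h.coding_preimage_closedBall_subset hc hc1 hr0 hr1 x)
    _ ≤ ∑ w ∈ hA.toFinset, bernoulli P {ω | word ω w.length = w} :=
        measure_biUnion_finset_le _ _
    _ ≤ hA.toFinset.card * ENNReal.ofReal r ^ s := by
        simpa using Finset.sum_le_sum hcyl
    _ ≤ ENNReal.ofReal (4 / m) * ENNReal.ofReal r ^ s := mul_le_mul_left hcard _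

theorem sum_ediam_rpow_eq_one [Fintype ι] {s : ℝ} (hs : 0 ≤ s) (hsum : ∑ i, lam i ^ s = 1)
    {n : ℕ} (hn : n ≠ 0) : ∑ f : Fin n → ι, ediam (Δ (List.ofFn f)) ^ s = 1 := by
  have hterm : ∀ f : Fin n → ι,
      ediam (Δ (List.ofFn f)) ^ s = ENNReal.ofReal (∏ i, lam (f i) ^ s) := by
    intro f
    rw [h.ediam_eq (by simpa using hn),
      ENNReal.ofReal_rpow_of_nonneg (List.prod_map_nonneg h.nonneg _) hs, List.map_ofFn,
      List.prod_ofFn, Real.finsetProd_rpow _ _ fun i _ => h.nonneg _]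
    rfl
  simp_rw [hterm]
  rw [← ENNReal.ofReal_sum_of_nonneg fun f _ =>
      Finset.prod_nonneg fun i _ => Real.rpow_nonneg (h.nonneg _) s,
    ← Fintype.sum_pow (fun i => lam i ^ s), hsum, one_pow, ENNReal.ofReal_one]

theorem dimH_limitSet_le [Fintype ι] {s : ℝ} (hs : 0 ≤ s) (hsum : ∑ i, lam i ^ s = 1) :
    dimH (limitSet Δ) ≤ ENNReal.ofReal s := by
  obtain ⟨c, ⟨hc0, hc1⟩, hc⟩ :=
    exists_forall_le_of_mem_Ico fun i => ⟨h.nonneg i, (h.mem_Ioo i).2⟩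
  have hcover := Measure.hausdorffMeasure_le_liminf_sum s (limitSet Δ) (l := atTop)
    (fun n => ENNReal.ofReal (c ^ n))
    (by simpa using ENNReal.tendsto_ofReal (tendsto_pow_atTop_nhds_zero_of_lt_one hc0 hc1))
    (fun n (f : Fin n → ι) => Δ (List.ofFn f))
    ((eventually_ne_atTop 0).mono fun n hn f => by
      rw [h.ediam_eq (by simpa using hn)]
      simpa using ENNReal.ofReal_le_ofReal (List.prod_map_le_pow h.nonneg hc (List.ofFn f)))
    ((eventually_ne_atTop 0).mono fun n hn x hx => by
      obtain ⟨w, rfl, hxw⟩ := mem_iUnion₂.1 (mem_iInter₂.1 hx n (Nat.one_le_iff_ne_zero.2 hn))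
      exact mem_iUnion.2 ⟨fun i => w[(i : ℕ)], by rwa [List.ofFn_getElem]⟩)
  rw [liminf_congr ((eventually_ne_atTop 0).mono fun n => h.sum_ediam_rpow_eq_one hs hsum),
    liminf_const] at hcover
  exact dimH_le_of_hausdorffMeasure_ne_top (d := s.toNNReal)
    (by rw [Real.coe_toNNReal s hs]; exact ne_top_of_le_ne_top ENNReal.one_ne_top hcover)

theorem le_dimH_limitSet [Fintype ι] {s : ℝ} (hs : 0 ≤ s) (hsum : ∑ i, lam i ^ s = 1) :
    ENNReal.ofReal s ≤ dimH (limitSet Δ) := by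
  let : MeasurableSpace ι := ⊤
  have : MeasurableSingletonClass ι := ⟨fun _ => MeasurableSpace.measurableSet_top⟩
  obtain ⟨c, ⟨hc0, hc1⟩, hc⟩ :=
    exists_forall_le_of_mem_Ico fun i => ⟨h.nonneg i, (h.mem_Ioo i).2⟩
  obtain ⟨m, hm0, hm⟩ := exists_pos_forall_le fun i => (h.mem_Ioo i).1
  let P : PMF ι := PMF.ofFintype (fun i => ENNReal.ofReal (lam i ^ s)) (by
    rw [← ENNReal.ofReal_sum_of_nonneg fun i _ => Real.rpow_nonneg (h.nonneg i) s, hsum,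
      ENNReal.ofReal_one])
  refine le_dimH_of_measure_closedBall_le ((bernoulli P).map (coding Δ)) hs one_pos
    (ENNReal.ofReal_pos.2 (by positivity)).ne' ENNReal.ofReal_ne_top
    (fun x r hr => h.map_coding_closedBall_le hs P rfl hc hc0 hc1 hm hm0 hr.1 hr.2 x) ?_
  have hpre : coding Δ ⁻¹' limitSet Δ = univ := eq_univ_of_forall h.coding_mem_limitSet
  have hle := Measure.le_map_apply (μ := bernoulli P) (measurable_coding Δ).aemeasurable
    (limitSet Δ)
  rw [hpre, measure_univ] at hle
  exact (zero_lt_one.trans_le hle).ne'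

end IsConstruction

end Moran

theorem moran_theorem_general {p : ℕ} (lam : Fin p → ℝ)
    (hlam : ∀ k, lam k ∈ Set.Ioo (0 : ℝ) 1)
    (Δ : List (Fin p) → Set ℝ)
    (hInt : ∀ w : List (Fin p), w ≠ [] →
      ∃ a : ℝ, Δ w = Set.Icc a (a + (w.map lam).prod))
    (hDisj : ∀ w w' : List (Fin p), w ≠ [] → w.length = w'.length → w ≠ w' →
      Disjoint (Δ w) (Δ w'))
    (hNest : ∀ (w : List (Fin p)) (i : Fin p), w ≠ [] → Δ (w ++ [i]) ⊆ Δ w)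
    (F : Set ℝ)
    (hF : F = ⋂ (n : ℕ) (_ : 1 ≤ n),
      ⋃ (w : List (Fin p)) (_ : w.length = n), Δ w)
    (s : ℝ) (hs : 0 ≤ s) (hsum : ∑ k, lam k ^ s = 1) :
    dimH F = ENNReal.ofReal s := by
  have h : Moran.IsConstruction lam Δ := ⟨hlam, hInt, hDisj, hNest⟩
  subst hF
  exact le_antisymm (h.dimH_limitSet_le hs hsum) (h.le_dimH_limitSet hs hsum)

/-- **Moran's theorem.** Let `λ₁, …, λ_p ∈ (0,1)` and let `Δ_w`, indexed by nonempty
finite words `w` over `{1,…,p}`, be closed intervals of length `∏_{k} λ_{w_k}`, pairwise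
disjoint within each generation and nested (`Δ_{w i} ⊆ Δ_w`).  Then the limit set
`F = ⋂_{n ≥ 1} ⋃_{|w| = n} Δ_w` has Hausdorff dimension the unique `s` with
`∑ λ_k ^ s = 1`. -/
theorem moran_theorem {p : ℕ} (hp : 0 < p) (lam : Fin p → ℝ)
    (hlam : ∀ k, lam k ∈ Set.Ioo (0 : ℝ) 1)
    (Δ : List (Fin p) → Set ℝ)
    (hInt : ∀ w : List (Fin p), w ≠ [] →
      ∃ a : ℝ, Δ w = Set.Icc a (a + (w.map lam).prod))
    (hDisj : ∀ w w' : List (Fin p), w ≠ [] → w.length = w'.length → w ≠ w' →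
      Disjoint (Δ w) (Δ w'))
    (hNest : ∀ (w : List (Fin p)) (i : Fin p), w ≠ [] → Δ (w ++ [i]) ⊆ Δ w)
    (F : Set ℝ)
    (hF : F = ⋂ (n : ℕ) (_ : 1 ≤ n),
      ⋃ (w : List (Fin p)) (_ : w.length = n), Δ w)
    (s : ℝ) (hs : 0 ≤ s) (hsum : ∑ k, lam k ^ s = 1) :
    dimH F = ENNReal.ofReal s :=
  moran_theorem_general lam hlam Δ hInt hDisj hNest F hF s hs hsum
end

section
/- Borel's normal number theorem: for Lebesgue-almost every x ∈ [0,1] and every digit k ∈ {0,…,m−1}, the frequency τ_k(x) = lim_{n→∞} (1/n)·#{i ≤ n : x_i = k} exists and equals 1/m, where 0.x₁x₂⋯ is the base-m expansion of x. -/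
open Filter MeasureTheory

/-- The `i`-th digit (`i ≥ 1`) of the base-`m` expansion of `x ∈ [0,1]`:
`x_i = ⌊m^i x⌋ mod m`. -/
noncomputable def baseDigit (m : ℕ) (x : ℝ) (i : ℕ) : ℤ :=
  ⌊x * (m : ℝ) ^ i⌋ % m

/-!
Fix a digit `k < m`. For Lebesgue measure on `[0, 1]`, the first `j` digits of `x` are the base-`m`
digits of `⌊m ^ j x⌋`, which is uniformly distributed on `{0, …, m ^ j - 1}`. Counting by `div`
and `mod` then shows that the events `{x_i = k}`, `i ≥ 1`, all have probability `1 / m` and are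
pairwise independent. Etemadi's strong law of large numbers, which only needs pairwise
independence, applied to their indicators gives the frequency `1 / m` almost surely.
-/

open ProbabilityTheory Finset

theorem card_filter_range_mul_div_mod (A : ℕ) {B : ℕ} (hB : 0 < B) (P Q : ℕ → Prop)
    [DecidablePred P] [DecidablePred Q] :
    #{t ∈ range (A * B) | P (t / B) ∧ Q (t % B)}
      = #{a ∈ range A | P a} * #{b ∈ range B | Q b} := by
  have hdiv {a b : ℕ} (hb : b < B) : (a * B + b) / B = a := by
    rw [mul_comm, Nat.mul_add_div hB, Nat.div_eq_of_lt hb, add_zero]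
  have hmod {a b : ℕ} (hb : b < B) : (a * B + b) % B = b := by
    rw [mul_comm, Nat.mul_add_mod, Nat.mod_eq_of_lt hb]
  rw [← card_product]
  refine card_nbij' (fun t => (t / B, t % B)) (fun p => p.1 * B + p.2) ?_ ?_ ?_ ?_
  · intro t ht
    simp only [coe_filter, coe_product, Set.mem_prod, Set.mem_ofPred_eq, mem_range] at ht ⊢
    exact ⟨⟨Nat.div_lt_of_lt_mul (mul_comm A B ▸ ht.1), ht.2.1⟩, Nat.mod_lt _ hB, ht.2.2⟩
  · rintro ⟨a, b⟩ h
    simp only [coe_filter, coe_product, Set.mem_prod, Set.mem_ofPred_eq, mem_range] at h ⊢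
    obtain ⟨⟨ha, hPa⟩, hb, hQb⟩ := h
    exact ⟨by nlinarith, by rwa [hdiv hb], by rwa [hmod hb]⟩
  · intro t _
    exact Nat.div_add_mod' t B
  · rintro ⟨a, b⟩ h
    simp only [coe_filter, coe_product, Set.mem_prod, Set.mem_ofPred_eq, mem_range] at h
    simp [hdiv h.2.1, hmod h.2.1]

theorem card_filter_range_mul_mod_eq (a : ℕ) {m k : ℕ} (hk : k < m) :
    #{t ∈ range (a * m) | t % m = k} = a := by
  simpa [filter_eq', hk] using
    card_filter_range_mul_div_mod a (by omega : 0 < m) (fun _ => True) (· = k)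

theorem card_filter_range_pow_mod_eq {m k : ℕ} (hk : k < m) {n : ℕ} (hn : n ≠ 0) :
    #{t ∈ range (m ^ n) | t % m = k} = m ^ (n - 1) := by
  rw [← card_filter_range_mul_mod_eq (m ^ (n - 1)) hk, ← pow_succ, Nat.sub_add_cancel (by omega)]

theorem card_filter_Icc_one_eq_card_filter_range (p : ℕ → Prop) [DecidablePred p] (n : ℕ) :
    #{i ∈ Icc 1 n | p i} = #{i ∈ range n | p (i + 1)} := by
  rw [← Ico_add_one_right_eq_Icc, range_eq_Ico, ← map_add_right_Ico 0 n 1, filter_map, card_map]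
  rfl

namespace ProbabilityTheory

variable {Ω : Type*} {mΩ : MeasurableSpace Ω} {μ : Measure Ω} {s t : Set Ω}

theorem IndepSet.indepFun_indicator_one (h : IndepSet s t μ) :
    IndepFun (s.indicator (1 : Ω → ℝ)) (t.indicator (1 : Ω → ℝ)) μ := by
  have hs : Measurable[MeasurableSpace.generateFrom {s}] (s.indicator (1 : Ω → ℝ)) :=
    measurable_const.indicator (MeasurableSpace.measurableSet_generateFrom rfl)
  have ht : Measurable[MeasurableSpace.generateFrom {t}] (t.indicator (1 : Ω → ℝ)) :=
    measurable_const.indicator (MeasurableSpace.measurableSet_generateFrom rfl)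
  rw [IndepFun_iff_Indep]
  exact indep_of_indep_of_le_right (indep_of_indep_of_le_left h hs.comap_le) ht.comap_le

theorem identDistrib_indicator_one [IsFiniteMeasure μ] (hs : MeasurableSet s)
    (ht : MeasurableSet t) (hst : μ s = μ t) :
    IdentDistrib (s.indicator (1 : Ω → ℝ)) (t.indicator (1 : Ω → ℝ)) μ μ := by
  have hms : Measurable (s.indicator (1 : Ω → ℝ)) := measurable_const.indicator hs
  have hmt : Measurable (t.indicator (1 : Ω → ℝ)) := measurable_const.indicator ht
  refine ⟨hms.aemeasurable, hmt.aemeasurable, ?_⟩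
  ext u hu
  classical
  rw [Measure.map_apply hms hu, Measure.map_apply hmt hu, Pi.one_def,
    Set.indicator_const_preimage_eq_union, Set.indicator_const_preimage_eq_union]
  by_cases h1 : (1 : ℝ) ∈ u <;> by_cases h0 : (0 : ℝ) ∈ u <;>
    simp [h1, h0, hst, measure_compl hs (measure_ne_top μ s),
      measure_compl ht (measure_ne_top μ t)]

open Classical in
theorem ae_tendsto_card_filter_mem_div [IsFiniteMeasure μ] {A : ℕ → Set Ω}
    (hA : ∀ i, MeasurableSet (A i)) (hindep : Pairwise fun i j => IndepSet (A i) (A j) μ)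
    (hμA : ∀ i, μ (A i) = μ (A 0)) :
    ∀ᵐ ω ∂μ, Tendsto (fun n : ℕ => (#{i ∈ range n | ω ∈ A i} : ℝ) / n) atTop
      (nhds (μ.real (A 0))) := by
  have hlln := strong_law_ae_real (fun i => (A i).indicator 1)
    ((integrable_const 1).indicator (hA 0))
    (fun i j hij => IndepSet.indepFun_indicator_one (hindep hij))
    (fun i => identDistrib_indicator_one (hA i) (hA 0) (hμA i))
  rw [integral_indicator_one (hA 0)] at hlln
  filter_upwards [hlln] with ω hω
  simpa [Set.indicator_apply] using hω

end ProbabilityTheory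

theorem natFloor_mul_fiber_inter_Ico {N : ℕ} (hN : 0 < N) {t : ℕ} (ht : t < N) :
    {x : ℝ | ⌊x * N⌋₊ = t} ∩ Set.Ico 0 1 = Set.Ico ((t : ℝ) / N) ((t + 1) / N) := by
  have hN' : (0 : ℝ) < N := by exact_mod_cast hN
  have ht' : (t : ℝ) + 1 ≤ N := by exact_mod_cast ht
  ext x
  simp only [Set.mem_inter_iff, Set.mem_ofPred_eq, Set.mem_Ico, div_le_iff₀ hN', lt_div_iff₀ hN']
  constructor
  · rintro ⟨h, hx0, -⟩
    exact (Nat.floor_eq_iff (by positivity)).1 h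
  · rintro ⟨h1, h2⟩
    have hx0 : 0 ≤ x := nonneg_of_mul_nonneg_left (le_trans (Nat.cast_nonneg t) h1) hN'
    exact ⟨(Nat.floor_eq_iff (by positivity)).2 ⟨h1, h2⟩, hx0, by nlinarith⟩

theorem volume_restrict_Icc_natFloor_mul {N : ℕ} (hN : 0 < N) (P : ℕ → Prop) [DecidablePred P] :
    volume.restrict (Set.Icc (0 : ℝ) 1) {x | P ⌊x * N⌋₊}
      = ENNReal.ofReal (#{t ∈ range N | P t} / N) := by
  set f : ℝ → ℕ := fun x => ⌊x * N⌋₊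
  have hf : Measurable f := (measurable_id.mul_const _).nat_floor
  have hlt : ∀ x ∈ Set.Ico (0 : ℝ) 1, f x < N := fun x hx =>
    (Nat.floor_lt' hN.ne').2 (mul_lt_of_lt_one_left (Nat.cast_pos.2 hN) hx.2)
  have hset : {x | P (f x)} ∩ Set.Ico 0 1 = f ⁻¹' ↑{t ∈ range N | P t} ∩ Set.Ico 0 1 := by
    ext x
    simp only [Set.mem_inter_iff, Set.mem_preimage, coe_filter, mem_range, Set.mem_ofPred_eq]
    exact ⟨fun ⟨h, hx⟩ => ⟨⟨hlt x hx, h⟩, hx⟩, fun ⟨h, hx⟩ => ⟨h.2, hx⟩⟩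
  have hfiber : ∀ t ∈ ({t ∈ range N | P t} : Finset ℕ),
      volume.restrict (Set.Ico (0 : ℝ) 1) (f ⁻¹' {t}) = ENNReal.ofReal (1 / N) := by
    intro t ht
    rw [Measure.restrict_apply' measurableSet_Ico]
    simp only [Set.preimage, Set.mem_singleton_iff]
    rw [natFloor_mul_fiber_inter_Ico hN (mem_range.1 (mem_filter.1 ht).1), Real.volume_Ico]
    congr 1
    ring
  rw [Measure.restrict_congr_set Ico_ae_eq_Icc.symm, Measure.restrict_apply' measurableSet_Ico,
    hset, ← Measure.restrict_apply' measurableSet_Ico,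
    ← sum_measure_preimage_singleton _ fun t _ => hf (measurableSet_singleton t),
    sum_congr rfl hfiber, sum_const, nsmul_eq_mul, ← ENNReal.ofReal_natCast,
    ← ENNReal.ofReal_mul (by positivity), mul_one_div]

noncomputable def digit (m i : ℕ) (x : ℝ) : ℕ := ⌊x * (m : ℝ) ^ i⌋₊ % m

theorem baseDigit_eq_digit (m i : ℕ) {x : ℝ} (hx : 0 ≤ x) : baseDigit m x i = digit m i x := by
  rw [baseDigit, digit, ← Int.natCast_floor_eq_floor (by positivity), Int.natCast_mod]

theorem digit_eq_natFloor_div {m : ℕ} (hm : 0 < m) (i d : ℕ) (x : ℝ) :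
    digit m i x = ⌊x * (m : ℝ) ^ (i + d)⌋₊ / m ^ d % m := by
  have hm' : (m : ℝ) ≠ 0 := by exact_mod_cast hm.ne'
  rw [digit, ← Nat.floor_div_natCast, Nat.cast_pow, pow_add, ← mul_assoc,
    mul_div_cancel_right₀ _ (pow_ne_zero _ hm')]

theorem measurableSet_digit_eq (m i k : ℕ) : MeasurableSet {x | digit m i x = k} :=
  (measurable_id.mul_const _).nat_floor (MeasurableSet.of_discrete (s := {t : ℕ | t % m = k}))

theorem volume_restrict_Icc_digit_eq {m k : ℕ} (hk : k < m) {i : ℕ} (hi : i ≠ 0) :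
    volume.restrict (Set.Icc (0 : ℝ) 1) {x | digit m i x = k} = ENNReal.ofReal (1 / m) := by
  have hm : 0 < m := by omega
  have h := volume_restrict_Icc_natFloor_mul (pow_pos hm i) (· % m = k)
  rw [Nat.cast_pow, card_filter_range_pow_mod_eq hk hi] at h
  simp only [digit, h]
  congr 1
  obtain ⟨i, rfl⟩ := Nat.exists_eq_add_one_of_ne_zero hi
  field_simp
  push_cast
  ring

theorem volume_restrict_Icc_digit_eq_inter_digit_eq {m k : ℕ} (hk : k < m) {i j : ℕ}
    (hi : i ≠ 0) (hij : i < j) :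
    volume.restrict (Set.Icc (0 : ℝ) 1) ({x | digit m i x = k} ∩ {x | digit m j x = k})
      = ENNReal.ofReal (1 / m) * ENNReal.ofReal (1 / m) := by
  have hm : 0 < m := by omega
  obtain ⟨d, rfl⟩ := Nat.exists_eq_add_of_lt hij
  have hset : {x | digit m i x = k} ∩ {x | digit m (i + d + 1) x = k}
      = {x | ⌊x * (m : ℝ) ^ (i + (d + 1))⌋₊ / m ^ (d + 1) % m = k ∧
          ⌊x * (m : ℝ) ^ (i + (d + 1))⌋₊ % m ^ (d + 1) % m = k} := by
    ext x
    simp only [Set.mem_inter_iff, Set.mem_ofPred_eq,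
      Nat.mod_mod_of_dvd _ (dvd_pow_self m (d.succ_ne_zero : d + 1 ≠ 0))]
    rw [digit_eq_natFloor_div hm i (d + 1), digit, add_assoc]
  have h := volume_restrict_Icc_natFloor_mul (pow_pos hm (i + (d + 1)))
    (fun t => t / m ^ (d + 1) % m = k ∧ t % m ^ (d + 1) % m = k)
  rw [pow_add, card_filter_range_mul_div_mod _ (pow_pos hm _) (· % m = k) (· % m = k),
    card_filter_range_pow_mod_eq hk hi, card_filter_range_pow_mod_eq hk d.succ_ne_zero,
    ← pow_add, Nat.cast_pow] at h
  rw [hset, h, ← ENNReal.ofReal_mul (by positivity)]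
  congr 1
  obtain ⟨i, rfl⟩ := Nat.exists_eq_add_one_of_ne_zero hi
  field_simp
  push_cast
  ring

instance : IsProbabilityMeasure (volume.restrict (Set.Icc (0 : ℝ) 1)) :=
  ⟨by simp⟩

theorem indepSet_digit_eq {m k : ℕ} (hk : k < m) {i j : ℕ} (hi : i ≠ 0) (hij : i < j) :
    IndepSet {x | digit m i x = k} {x | digit m j x = k}
      (volume.restrict (Set.Icc (0 : ℝ) 1)) := by
  rw [indepSet_iff_measure_inter_eq_mul (measurableSet_digit_eq m i k)
      (measurableSet_digit_eq m j k) _,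
    volume_restrict_Icc_digit_eq_inter_digit_eq hk hi hij, volume_restrict_Icc_digit_eq hk hi,
    volume_restrict_Icc_digit_eq hk (by omega)]

theorem pairwise_indepSet_digit_succ_eq {m k : ℕ} (hk : k < m) :
    Pairwise fun i j => IndepSet {x | digit m (i + 1) x = k} {x | digit m (j + 1) x = k}
      (volume.restrict (Set.Icc (0 : ℝ) 1)) := by
  intro i j hij
  rcases hij.lt_or_gt with h | h
  · exact indepSet_digit_eq hk i.succ_ne_zero (by omega)
  · exact (indepSet_digit_eq hk j.succ_ne_zero (by omega)).symm

theorem borel_normal_numbers_general (m : ℕ) :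
    ∀ᵐ x ∂(volume.restrict (Set.Icc (0 : ℝ) 1)), ∀ k : ℕ, k < m →
      Tendsto (fun n : ℕ =>
          (((Finset.Icc 1 n).filter (fun i => baseDigit m x i = (k : ℤ))).card : ℝ) / n)
        atTop (nhds (1 / m)) := by
  refine ae_all_iff.2 fun k => ?_
  by_cases hk : k < m
  swap
  · exact ae_of_all _ fun _ h => absurd h hk
  have hprob (i : ℕ) := volume_restrict_Icc_digit_eq hk (Nat.succ_ne_zero i)
  have hfreq := ae_tendsto_card_filter_mem_div (fun i => measurableSet_digit_eq m (i + 1) k)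
    (pairwise_indepSet_digit_succ_eq hk) (fun i => by rw [hprob i, hprob 0])
  rw [measureReal_def, hprob 0, ENNReal.toReal_ofReal (by positivity)] at hfreq
  filter_upwards [hfreq, ae_restrict_mem measurableSet_Icc] with x hx hxI _
  convert hx using 4 with n
  simp only [card_filter_Icc_one_eq_card_filter_range, baseDigit_eq_digit _ _ hxI.1, Nat.cast_inj]
  congr!

/-- **Borel's normal number theorem.**  For Lebesgue-almost every `x ∈ [0,1]` and every
digit `k ∈ {0,…,m−1}`, the frequency of `k` among the base-`m` digits of `x` exists and
equals `1/m`. -/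
theorem borel_normal_numbers (m : ℕ) (hm : 1 < m) :
    ∀ᵐ x ∂(volume.restrict (Set.Icc (0 : ℝ) 1)), ∀ k : ℕ, k < m →
      Tendsto (fun n : ℕ =>
          (((Finset.Icc 1 n).filter (fun i => baseDigit m x i = (k : ℤ))).card : ℝ) / n)
        atTop (nhds (1 / m)) :=
  borel_normal_numbers_general m
end

section
/- Kac's lemma: let T: X → X preserve an ergodic probability measure μ and let A ⊆ X be measurable with μ(A) > 0. Define the first return time τ_A(x) = inf{n ≥ 1 : Tⁿx ∈ A} for x ∈ A. Then ∫_A τ_A dμ = 1. -/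
open MeasureTheory Filter Topology
open scoped ENNReal

private lemma kac_nat_cast_tsum (n : ℕ) :
    (n : ℝ≥0∞) = ∑' k : ℕ, if k < n then (1 : ℝ≥0∞) else 0 := by
  rw [tsum_eq_sum (s := Finset.range n) (fun k hk => by
    simp [Finset.mem_range] at hk; simp [hk])]
  rw [Finset.sum_congr rfl (fun k hk => if_pos (Finset.mem_range.mp hk))]
  simp

/-- **Kac's lemma.**  Let `T` preserve an ergodic probability measure `μ` and let `A`
be measurable with `μ(A) > 0`.  With `τ_A(x) = inf {n ≥ 1 : Tⁿx ∈ A}` (the first return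
time), one has `∫_A τ_A dμ = 1`. -/
theorem kac_lemma {X : Type*} [MeasurableSpace X] (μ : Measure X)
    [IsProbabilityMeasure μ] (T : X → X) (hT : MeasurePreserving T μ μ)
    (hErg : Ergodic T μ) (A : Set X) (hA : MeasurableSet A) (hApos : 0 < μ A) :
    ∫⁻ x in A, ((sInf {n : ℕ | 0 < n ∧ T^[n] x ∈ A} : ℕ) : ℝ≥0∞) ∂μ = 1 := by
  classical
  set τ : X → ℕ := fun x => sInf {n : ℕ | 0 < n ∧ T^[n] x ∈ A} with hτ
  have hTm : Measurable T := hT.measurable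
  have hTit : ∀ j : ℕ, Measurable (T^[j]) := fun j => hTm.iterate j
  -- the sets E k : no return during times 1..k
  set E : ℕ → Set X := fun k => ⋂ j ∈ Set.Icc 1 k, T^[j] ⁻¹' Aᶜ with hE
  have hEmem : ∀ k x, x ∈ E k ↔ ∀ j, 1 ≤ j → j ≤ k → T^[j] x ∉ A := by
    intro k x
    simp [hE, Set.mem_iInter, and_imp]
  have hEmeas : ∀ k, MeasurableSet (E k) :=
    fun k => MeasurableSet.biInter (Set.to_countable _)
      (fun j _ => (hTit j) hA.compl)
  -- the set of points returning to A
  set R : Set X := {x | ∃ n : ℕ, 0 < n ∧ T^[n] x ∈ A} with hR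
  have hRmeas : MeasurableSet R := by
    have : R = ⋃ n : ℕ, ⋃ (_ : 0 < n), T^[n] ⁻¹' A := by
      ext x; simp [hR]
    rw [this]
    exact MeasurableSet.iUnion fun n => MeasurableSet.iUnion fun _ => (hTit n) hA
  -- the sets {x | k < τ x}
  have hset : ∀ k : ℕ, {x | k < τ x} = R ∩ E k := by
    intro k
    ext x
    constructor
    · intro (hx : k < τ x)
      have hne : {n : ℕ | 0 < n ∧ T^[n] x ∈ A}.Nonempty := by
        by_contra h
        rw [Set.not_nonempty_iff_eq_empty] at h
        simp [hτ, h] at hx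
      refine ⟨hne, (hEmem k x).2 fun j hj1 hjk hjA => ?_⟩
      have : τ x ≤ j := Nat.sInf_le ⟨hj1, hjA⟩
      omega
    · rintro ⟨hxR, hxE⟩
      have hmem := Nat.sInf_mem hxR
      show k < τ x
      by_contra h
      push_neg at h
      exact (hEmem k x).1 hxE (τ x) hmem.1 h hmem.2
  -- Poincaré recurrence: almost every point of A returns
  have hAR : μ (A \ R) = 0 := by
    have h := hT.conservative.ae_mem_imp_frequently_image_mem hA.nullMeasurableSet
    refine measure_mono_null (fun x hx => ?_) h
    intro hcon
    obtain ⟨n, hn1, hnA⟩ := ((hcon hx.1).and_eventually (eventually_ge_atTop 1)).exists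
    exact hx.2 ⟨n, by omega, hn1⟩
  -- the key measure identity
  have hmeasEq : ∀ k, μ (A ∩ {x | k < τ x}) = μ (A ∩ E k) := by
    intro k
    rw [hset k, ← Set.inter_assoc]
    refine le_antisymm (measure_mono (by intro x hx; exact ⟨hx.1.1, hx.2⟩)) ?_
    calc μ (A ∩ E k) ≤ μ (A ∩ R ∩ E k ∪ A \ R) := by
          refine measure_mono fun x hx => ?_
          by_cases hxR : x ∈ R
          · exact Or.inl ⟨⟨hx.1, hxR⟩, hx.2⟩
          · exact Or.inr ⟨hx.1, hxR⟩
      _ ≤ μ (A ∩ R ∩ E k) + μ (A \ R) := measure_union_le _ _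
      _ = μ (A ∩ R ∩ E k) := by rw [hAR, add_zero]
  -- the sets D k : not in A at times 0..k
  set D : ℕ → Set X := fun k => Aᶜ ∩ E k with hD
  have hDmeas : ∀ k, MeasurableSet (D k) := fun k => hA.compl.inter (hEmeas k)
  have hpre : ∀ k, T ⁻¹' D k = E (k + 1) := by
    intro k
    ext x
    simp only [hD, Set.mem_preimage, Set.mem_inter_iff, Set.mem_compl_iff, hEmem]
    constructor
    · rintro ⟨h0, h⟩ j hj1 hjk
      rcases Nat.exists_eq_succ_of_ne_zero (by omega : j ≠ 0) with ⟨i, rfl⟩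
      rcases Nat.eq_zero_or_pos i with hi | hi
      · subst hi; simpa using h0
      · have := h i hi (by omega)
        rwa [Function.iterate_succ_apply] 
    · intro h
      refine ⟨by simpa using h 1 le_rfl (by omega), fun j hj1 hjk => ?_⟩
      have := h (j + 1) (by omega) (by omega)
      rwa [Function.iterate_succ_apply] at this
  have hED : ∀ k, μ (E (k + 1)) = μ (D k) := by
    intro k
    rw [← hpre k]
    exact hT.measure_preimage (hDmeas k).nullMeasurableSet
  -- partial sums
  have hsum : ∀ N : ℕ, (∑ k ∈ Finset.range (N + 1), μ (A ∩ E k)) + μ (D N) = 1 := by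
    intro N
    induction N with
    | zero =>
      have hE0 : E 0 = Set.univ := by
        ext x
        simp only [hEmem, Set.mem_univ, iff_true]
        omega
      have hD0 : D 0 = Aᶜ := by rw [hD]; simp [hE0]
      simp only [zero_add, Finset.sum_range_one, hE0, Set.inter_univ, hD0]
      rw [measure_add_measure_compl hA, measure_univ]
    | succ N ih =>
      rw [Finset.sum_range_succ]
      rw [add_assoc]
      have hsplit : μ (A ∩ E (N + 1)) + μ (D (N + 1)) = μ (E (N + 1)) := by
        have h := measure_inter_add_diff (E (N + 1)) hA (μ := μ)
        have hDeq : D (N + 1) = E (N + 1) \ A := by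
          rw [hD]; ext x; simp [Set.mem_diff, and_comm]
        rw [hDeq, Set.inter_comm A]
        exact h
      rw [hsplit, hED N]
      exact ih
  -- the never-returning set is null
  have hDinf : μ (⋂ n, D n) = 0 := by
    set Dinf := ⋂ n, D n with hDinfdef
    have hDinfm : ∀ x, x ∈ Dinf ↔ ∀ j : ℕ, T^[j] x ∉ A := by
      intro x
      simp only [hDinfdef, Set.mem_iInter, Set.mem_inter_iff, Set.mem_compl_iff, hEmem, hD]
      constructor
      · intro h j
        rcases Nat.eq_zero_or_pos j with hj | hj
        · subst hj; simpa using (h 0).1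
        · exact (h j).2 j hj le_rfl
      · intro h j
        exact ⟨by simpa using h 0, fun i _ _ => h i⟩
    have hsub : Dinf ⊆ T ⁻¹' Dinf := by
      intro x hx
      rw [Set.mem_preimage, hDinfm]
      intro j
      rw [← Function.iterate_succ_apply]
      exact (hDinfm x).1 hx (j + 1)
    have hDinfmeas : MeasurableSet Dinf := MeasurableSet.iInter hDmeas
    rcases hErg.ae_empty_or_univ_of_ae_le_preimage hDinfmeas.nullMeasurableSet
        hsub.eventuallyLE with h | h
    · exact ae_eq_empty.mp h
    · exfalso
      have : μ Dinfᶜ = 0 := ae_eq_univ.mp h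
      have hAc : A ⊆ Dinfᶜ := by
        intro x hx hxD
        exact (hDinfm x).1 hxD 0 (by simpa using hx)
      exact absurd (measure_mono_null hAc this) (by exact fun h0 => hApos.ne' h0)
  -- limit of μ (D N)
  have hDlim : Tendsto (fun N => μ (D N)) atTop (𝓝 0) := by
    have hanti : Antitone D := by
      intro m n hmn x hx
      exact ⟨hx.1, (hEmem m x).2 fun j hj1 hjm => (hEmem n x).1 hx.2 j hj1 (hjm.trans hmn)⟩
    have := tendsto_measure_iInter_atTop (μ := μ)
      (fun n => (hDmeas n).nullMeasurableSet) hanti ⟨0, measure_ne_top μ _⟩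
    rw [hDinf] at this
    exact this
  -- conclude the tsum
  have htsum : ∑' k : ℕ, μ (A ∩ E k) = 1 := by
    have h1 : Tendsto (fun N => ∑ k ∈ Finset.range (N + 1), μ (A ∩ E k)) atTop
        (𝓝 (∑' k : ℕ, μ (A ∩ E k))) :=
      (ENNReal.tendsto_nat_tsum _).comp (tendsto_add_atTop_nat 1)
    have h2 : Tendsto (fun N => (∑ k ∈ Finset.range (N + 1), μ (A ∩ E k)) + μ (D N))
        atTop (𝓝 ((∑' k : ℕ, μ (A ∩ E k)) + 0)) := h1.add hDlim
    rw [add_zero] at h2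
    have h3 : Tendsto (fun _ : ℕ => (1 : ℝ≥0∞)) atTop (𝓝 1) := tendsto_const_nhds
    have : (fun N => (∑ k ∈ Finset.range (N + 1), μ (A ∩ E k)) + μ (D N))
        = fun _ : ℕ => (1 : ℝ≥0∞) := funext hsum
    rw [this] at h2
    exact tendsto_nhds_unique h2 h3
  -- rewrite the integral
  have hint : ∫⁻ x in A, (τ x : ℝ≥0∞) ∂μ = ∑' k : ℕ, μ (A ∩ {x | k < τ x}) := by
    have heq : ∀ x, (τ x : ℝ≥0∞) = ∑' k : ℕ, ({y | k < τ y}.indicator (fun _ => 1) x) := by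
      intro x
      rw [kac_nat_cast_tsum (τ x)]
      congr 1
      ext k
      simp [Set.indicator_apply]
    calc ∫⁻ x in A, (τ x : ℝ≥0∞) ∂μ
        = ∫⁻ x in A, ∑' k : ℕ, ({y | k < τ y}.indicator (fun _ => 1) x) ∂μ := by
          exact lintegral_congr heq
      _ = ∑' k : ℕ, ∫⁻ x in A, ({y | k < τ y}.indicator (fun _ => 1) x) ∂μ := by
          refine lintegral_tsum fun k => ?_
          have : MeasurableSet {y | k < τ y} := by
            rw [hset k]; exact hRmeas.inter (hEmeas k)
          exact (measurable_one.indicator this).aemeasurable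
      _ = ∑' k : ℕ, μ (A ∩ {x | k < τ x}) := by
          congr 1
          ext k
          have hms : MeasurableSet {y | k < τ y} := by
            rw [hset k]; exact hRmeas.inter (hEmeas k)
          rw [lintegral_indicator hms, Measure.restrict_restrict hms]
          simp [Set.inter_comm]
  show ∫⁻ x in A, (τ x : ℝ≥0∞) ∂μ = 1
  rw [hint]
  rw [tsum_congr fun k => hmeasEq k]
  exact htsum
end
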